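/- arXiv:math/0110264 — 6 statements merged into one kernel-verified Lean document; each statement's English description precedes it below -/
import Mathlib

section
/- Let Γ be an additive subgroup of ℂ^k, H a Hermitian form on ℂ^k with Im H(γ,γ') ∈ ℤ for all γ,γ' ∈ Γ, and α : Γ → ℂ a semicharacter for H, i.e. |α(γ)| = 1 and α(γ₁+γ₂) = α(γ₁)·α(γ₂)·(−1)^{Im H(γ₁,γ₂)} for all γ₁,γ₂ ∈ Γ. Let φ̄ : ℂ^k → ℂ^k be ℂ-linear with φ̄(Γ) ⊆ Γ and let τ ∈ ℂ^k. Define H_φ(w,w') := H(φ̄w, φ̄w') and α_φ(γ) := α(φ̄γ)·exp(2πi·Im H(φ̄γ, τ)). Then (H_φ, α_φ) is again a type: H_φ is a Hermitian form with Im H_φ(γ,γ') ∈ ℤ for all γ,γ' ∈ Γ, every α_φ(γ) has modulus one, and α_φ(γ₁+γ₂) = α_φ(γ₁)·α_φ(γ₂)·(−1)^{Im H_φ(γ₁,γ₂)} for all γ₁,γ₂ ∈ Γ. -/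
open Complex

section HermitianForm

variable {V : Type*} [Add V] {H : V → V → ℂ}

theorem add_left_of_add_right_of_conj_symm
    (Hadd : ∀ w w₁ w₂, H w (w₁ + w₂) = H w w₁ + H w w₂)
    (Hconj : ∀ w w', H w' w = starRingEnd ℂ (H w w')) (w₁ w₂ w : V) :
    H (w₁ + w₂) w = H w₁ w + H w₂ w := by
  rw [Hconj w, Hadd, map_add, ← Hconj, ← Hconj]

end HermitianForm

theorem norm_exp_two_pi_I_mul_ofReal (x : ℝ) :
    ‖exp (2 * (Real.pi : ℂ) * I * (x : ℂ))‖ = 1 := by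
  rw [show 2 * (Real.pi : ℂ) * I * x = ((2 * Real.pi * x : ℝ) : ℂ) * I by push_cast; ring]
  exact norm_exp_ofReal_mul_I _

theorem exp_two_pi_I_mul_im_add (z₁ z₂ : ℂ) :
    exp (2 * (Real.pi : ℂ) * I * ((z₁ + z₂).im : ℂ)) =
      exp (2 * (Real.pi : ℂ) * I * (z₁.im : ℂ)) * exp (2 * (Real.pi : ℂ) * I * (z₂.im : ℂ)) := by
  rw [add_im, ofReal_add, mul_add, exp_add]

/-- If `(H, α)` is a type for the lattice `Γ` and `φ = φ̄ + τ` is an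
affine endomorphism with linear part `φ̄` preserving `Γ`, then
`(H_φ, α_φ)` with `H_φ(w,w') = H(φ̄w, φ̄w')` and
`α_φ(γ) = α(φ̄γ)·exp(2πi·Im H(φ̄γ, τ))` is again a type. -/
theorem type_pullback_is_type
    (k : ℕ) (Γ : AddSubgroup (Fin k → ℂ))
    (H : (Fin k → ℂ) → (Fin k → ℂ) → ℂ)
    -- `H` is a Hermitian form: additive and ℂ-linear in the second variable,
    -- conjugate-symmetric
    (Hadd : ∀ w w₁ w₂, H w (w₁ + w₂) = H w w₁ + H w w₂)
    (Hsmul : ∀ (c : ℂ) w w', H w (c • w') = c * H w w')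
    (Hconj : ∀ w w', H w' w = starRingEnd ℂ (H w w'))
    -- `Im H` is integral on `Γ`
    (Hint : ∀ γ ∈ Γ, ∀ γ' ∈ Γ, ∃ n : ℤ, (H γ γ').im = (n : ℝ))
    -- `α` is a semicharacter for `H`
    (α : (Fin k → ℂ) → ℂ)
    (hα1 : ∀ γ ∈ Γ, ‖α γ‖ = 1)
    (hα2 : ∀ γ₁ ∈ Γ, ∀ γ₂ ∈ Γ, ∀ n : ℤ, (H γ₁ γ₂).im = (n : ℝ) →
      α (γ₁ + γ₂) = α γ₁ * α γ₂ * (-1 : ℂ) ^ n)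
    -- the affine map `φ = φ̄ + τ`, with `φ̄(Γ) ⊆ Γ`
    (φ : (Fin k → ℂ) →ₗ[ℂ] (Fin k → ℂ))
    (hφΓ : ∀ γ ∈ Γ, φ γ ∈ Γ)
    (τ : Fin k → ℂ) :
    -- `H_φ` is additive in the second variable
    (∀ w w₁ w₂, H (φ w) (φ (w₁ + w₂)) = H (φ w) (φ w₁) + H (φ w) (φ w₂)) ∧
    -- `H_φ` is ℂ-linear in the second variable
    (∀ (c : ℂ) w w', H (φ w) (φ (c • w')) = c * H (φ w) (φ w')) ∧
    -- `H_φ` is conjugate-symmetric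
    (∀ w w', H (φ w') (φ w) = starRingEnd ℂ (H (φ w) (φ w'))) ∧
    -- `Im H_φ` is integral on `Γ`
    (∀ γ ∈ Γ, ∀ γ' ∈ Γ, ∃ n : ℤ, (H (φ γ) (φ γ')).im = (n : ℝ)) ∧
    -- `α_φ` has modulus one on `Γ`
    (∀ γ ∈ Γ,
      ‖α (φ γ) * Complex.exp (2 * (Real.pi : ℂ) * Complex.I *
        ((H (φ γ) τ).im : ℂ))‖ = 1) ∧
    -- `α_φ` is a semicharacter for `H_φ`
    (∀ γ₁ ∈ Γ, ∀ γ₂ ∈ Γ, ∀ n : ℤ, (H (φ γ₁) (φ γ₂)).im = (n : ℝ) →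
      α (φ (γ₁ + γ₂)) * Complex.exp (2 * (Real.pi : ℂ) * Complex.I *
          ((H (φ (γ₁ + γ₂)) τ).im : ℂ)) =
        (α (φ γ₁) * Complex.exp (2 * (Real.pi : ℂ) * Complex.I *
          ((H (φ γ₁) τ).im : ℂ))) *
        (α (φ γ₂) * Complex.exp (2 * (Real.pi : ℂ) * Complex.I *
          ((H (φ γ₂) τ).im : ℂ))) * (-1 : ℂ) ^ n) := by
  refine ⟨fun w w₁ w₂ => by rw [map_add, Hadd], fun c w w' => by rw [map_smul, Hsmul],
    fun w w' => Hconj _ _, fun γ hγ γ' hγ' => Hint _ (hφΓ γ hγ) _ (hφΓ γ' hγ'),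
    fun γ hγ => by rw [norm_mul, hα1 _ (hφΓ γ hγ), norm_exp_two_pi_I_mul_ofReal, one_mul], ?_⟩
  intro γ₁ hγ₁ γ₂ hγ₂ n hn
  -- `γ ↦ exp (2πi Im H(φ̄γ, τ))` is a character, so it does not disturb the semicharacter rule.
  have hα : α (φ (γ₁ + γ₂)) = α (φ γ₁) * α (φ γ₂) * (-1 : ℂ) ^ n := by
    rw [map_add]; exact hα2 _ (hφΓ γ₁ hγ₁) _ (hφΓ γ₂ hγ₂) n hn
  rw [hα, map_add, add_left_of_add_right_of_conj_symm Hadd Hconj, exp_two_pi_I_mul_im_add]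
  ring
end

section
/- Let Γ be an additive subgroup of ℂ^k, H a Hermitian form on ℂ^k with Im H(γ,γ') ∈ ℤ for all γ,γ' ∈ Γ, and α : Γ → ℂ a semicharacter for H, i.e. |α(γ)| = 1 and α(γ₁+γ₂) = α(γ₁)·α(γ₂)·(−1)^{Im H(γ₁,γ₂)}. Let φ̄ : ℂ^k → ℂ^k be ℂ-linear with φ̄(Γ) ⊆ Γ and τ ∈ ℂ^k, and define H_φ(w,w') := H(φ̄w, φ̄w') and α_φ(γ) := α(φ̄γ)·exp(2πi·Im H(φ̄γ, τ)). Then for every γ ∈ Γ and every x ∈ ℂ^k one has e_γ^{(H_φ,α_φ)}(x) · exp(π·H(τ, φ̄γ)) = e_{φ̄γ}^{(H,α)}(φ̄x + τ). -/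
open Complex

theorem Complex.exp_two_pi_I_mul_im_mul_exp_pi_mul_conj (z : ℂ) :
    exp (2 * Real.pi * I * z.im) * exp (Real.pi * starRingEnd ℂ z) = exp (Real.pi * z) := by
  rw [← exp_add]
  congr 1
  apply Complex.ext <;> simp
  ring

theorem multiplier_pullback_general
    (k : ℕ) (Γ : AddSubgroup (Fin k → ℂ))
    (H : (Fin k → ℂ) → (Fin k → ℂ) → ℂ)
    -- `H` is a Hermitian form
    (Hadd : ∀ w w₁ w₂, H w (w₁ + w₂) = H w w₁ + H w w₂)
    (Hconj : ∀ w w', H w' w = starRingEnd ℂ (H w w'))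
    (α : (Fin k → ℂ) → ℂ)
    -- the affine map `φ = φ̄ + τ`, with `φ̄(Γ) ⊆ Γ`
    (φ : (Fin k → ℂ) →ₗ[ℂ] (Fin k → ℂ))
    (τ : Fin k → ℂ) :
    ∀ γ ∈ Γ, ∀ x : Fin k → ℂ,
      -- `e_γ^{(H_φ,α_φ)}(x)`,  with  `H_φ(w,w') = H(φ̄w,φ̄w')` and
      -- `α_φ(γ) = α(φ̄γ)·exp(2πi·Im H(φ̄γ,τ))` ...
      (α (φ γ) * Complex.exp (2 * (Real.pi : ℂ) * Complex.I * ((H (φ γ) τ).im : ℂ))) *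
        Complex.exp ((Real.pi : ℂ) * (H (φ γ) (φ x) + H (φ γ) (φ γ) / 2)) *
      -- ... times `exp(π·H(τ, φ̄γ))` ...
        Complex.exp ((Real.pi : ℂ) * H τ (φ γ)) =
      -- ... equals `e_{φ̄γ}^{(H,α)}(φ̄x + τ)`
      α (φ γ) * Complex.exp ((Real.pi : ℂ) *
        (H (φ γ) (φ x + τ) + H (φ γ) (φ γ) / 2)) := by
  intro γ _ x
  rw [Hadd, add_right_comm (H (φ γ) (φ x)), mul_add _ _ (H (φ γ) τ), exp_add,
    ← exp_two_pi_I_mul_im_mul_exp_pi_mul_conj (H (φ γ) τ), ← Hconj]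
  ring

/-- with `(H_φ, α_φ)` the pulled-back type, the multipliers satisfy
`e_γ^{(H_φ,α_φ)}(x) · exp(π·H(τ, φ̄γ)) = e_{φ̄γ}^{(H,α)}(φ̄x + τ)`, where
`e_γ^{(H,α)}(x) = α(γ)·exp(π(H(γ,x) + H(γ,γ)/2))`. -/
theorem multiplier_pullback
    (k : ℕ) (Γ : AddSubgroup (Fin k → ℂ))
    (H : (Fin k → ℂ) → (Fin k → ℂ) → ℂ)
    -- `H` is a Hermitian form
    (Hadd : ∀ w w₁ w₂, H w (w₁ + w₂) = H w w₁ + H w w₂)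
    (Hsmul : ∀ (c : ℂ) w w', H w (c • w') = c * H w w')
    (Hconj : ∀ w w', H w' w = starRingEnd ℂ (H w w'))
    -- `Im H` is integral on `Γ`
    (Hint : ∀ γ ∈ Γ, ∀ γ' ∈ Γ, ∃ n : ℤ, (H γ γ').im = (n : ℝ))
    -- `α` is a semicharacter for `H`
    (α : (Fin k → ℂ) → ℂ)
    (hα1 : ∀ γ ∈ Γ, ‖α γ‖ = 1)
    (hα2 : ∀ γ₁ ∈ Γ, ∀ γ₂ ∈ Γ, ∀ n : ℤ, (H γ₁ γ₂).im = (n : ℝ) →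
      α (γ₁ + γ₂) = α γ₁ * α γ₂ * (-1 : ℂ) ^ n)
    -- the affine map `φ = φ̄ + τ`, with `φ̄(Γ) ⊆ Γ`
    (φ : (Fin k → ℂ) →ₗ[ℂ] (Fin k → ℂ))
    (hφΓ : ∀ γ ∈ Γ, φ γ ∈ Γ)
    (τ : Fin k → ℂ) :
    ∀ γ ∈ Γ, ∀ x : Fin k → ℂ,
      -- `e_γ^{(H_φ,α_φ)}(x)`,  with  `H_φ(w,w') = H(φ̄w,φ̄w')` and
      -- `α_φ(γ) = α(φ̄γ)·exp(2πi·Im H(φ̄γ,τ))` ...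
      (α (φ γ) * Complex.exp (2 * (Real.pi : ℂ) * Complex.I * ((H (φ γ) τ).im : ℂ))) *
        Complex.exp ((Real.pi : ℂ) * (H (φ γ) (φ x) + H (φ γ) (φ γ) / 2)) *
      -- ... times `exp(π·H(τ, φ̄γ))` ...
        Complex.exp ((Real.pi : ℂ) * H τ (φ γ)) =
      -- ... equals `e_{φ̄γ}^{(H,α)}(φ̄x + τ)`
      α (φ γ) * Complex.exp ((Real.pi : ℂ) *
        (H (φ γ) (φ x + τ) + H (φ γ) (φ γ) / 2)) :=
  multiplier_pullback_general k Γ H Hadd Hconj α φ τ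
end

section
/- Let Γ be an additive subgroup of ℂ^k, H a Hermitian form on ℂ^k, α : Γ → ℂ a function with nonzero values, φ̄ : ℂ^k → ℂ^k ℂ-linear with φ̄(Γ) ⊆ Γ, τ ∈ ℂ^k, and d a natural number. Assume H(φ̄w, φ̄w') = d·H(w,w') for all w,w' ∈ ℂ^k, and α(φ̄γ)·exp(2πi·Im H(φ̄γ, τ)) = α(γ)^d for all γ ∈ Γ. Then for every γ ∈ Γ and every x ∈ ℂ^k one has exp(π·H(τ, φ̄γ)) · (e_γ^{(H,α)}(x))^d = e_{φ̄γ}^{(H,α)}(φ̄x + τ). -/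
open Complex

/-- if `H(φ̄w,φ̄w') = d·H(w,w')` and
`α(φ̄γ)·exp(2πi·Im H(φ̄γ,τ)) = α(γ)^d`, then
`exp(π·H(τ,φ̄γ)) · (e_γ^{(H,α)}(x))^d = e_{φ̄γ}^{(H,α)}(φ̄x + τ)`, where
`e_γ^{(H,α)}(x) = α(γ)·exp(π(H(γ,x) + H(γ,γ)/2))`. -/
theorem multiplier_power_identity
    (k : ℕ) (Γ : AddSubgroup (Fin k → ℂ))
    (H : (Fin k → ℂ) → (Fin k → ℂ) → ℂ)
    -- `H` is a Hermitian form
    (Hadd : ∀ w w₁ w₂, H w (w₁ + w₂) = H w w₁ + H w w₂)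
    (Hsmul : ∀ (c : ℂ) w w', H w (c • w') = c * H w w')
    (Hconj : ∀ w w', H w' w = starRingEnd ℂ (H w w'))
    -- `α` does not vanish on `Γ`
    (α : (Fin k → ℂ) → ℂ)
    (hα0 : ∀ γ ∈ Γ, α γ ≠ 0)
    -- the affine map `φ = φ̄ + τ`, with `φ̄(Γ) ⊆ Γ`
    (φ : (Fin k → ℂ) →ₗ[ℂ] (Fin k → ℂ))
    (hφΓ : ∀ γ ∈ Γ, φ γ ∈ Γ)
    (τ : Fin k → ℂ)
    (d : ℕ)
    -- `H_φ = d·H`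
    (hHd : ∀ w w', H (φ w) (φ w') = (d : ℂ) * H w w')
    -- `α_φ = α^d`
    (hαd : ∀ γ ∈ Γ,
      α (φ γ) * Complex.exp (2 * (Real.pi : ℂ) * Complex.I * ((H (φ γ) τ).im : ℂ)) =
        (α γ) ^ d) :
    ∀ γ ∈ Γ, ∀ x : Fin k → ℂ,
      Complex.exp ((Real.pi : ℂ) * H τ (φ γ)) *
        (α γ * Complex.exp ((Real.pi : ℂ) * (H γ x + H γ γ / 2))) ^ d =
      α (φ γ) * Complex.exp ((Real.pi : ℂ) *
        (H (φ γ) (φ x + τ) + H (φ γ) (φ γ) / 2)) := by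
  intro γ hγ x
  have hz : H τ (φ γ) =
      H (φ γ) τ - 2 * Complex.I * ((H (φ γ) τ).im : ℂ) := by
    rw [Hconj]
    have h := Complex.sub_conj (H (φ γ) τ)
    push_cast at h ⊢
    linear_combination -h
  rw [mul_pow, ← Complex.exp_nat_mul, ← hαd γ hγ, Hadd, hHd, hHd]
  have key : Complex.exp ((Real.pi : ℂ) * H τ (φ γ)) *
      Complex.exp (2 * (Real.pi : ℂ) * Complex.I * ((H (φ γ) τ).im : ℂ)) *
      Complex.exp ((d : ℂ) * ((Real.pi : ℂ) * (H γ x + H γ γ / 2))) =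
      Complex.exp ((Real.pi : ℂ) *
        ((d : ℂ) * H γ x + H (φ γ) τ + (d : ℂ) * H γ γ / 2)) := by
    rw [← Complex.exp_add, ← Complex.exp_add, hz]
    ring_nf
  linear_combination α (φ γ) * key
end

section
/- Let k, d ≥ 1, H a Hermitian form on ℂ^k, D̄ : ℂ^k → ℂ^k ℂ-linear, τ, γ ∈ ℂ^k, and a, b nonzero complex numbers. Define e(x) := a·exp(π·(H(γ,x) + H(γ,γ)/2)) and E(y) := b·exp(π·(H(D̄γ, y) + H(D̄γ, D̄γ)/2)). Assume: (i) F : ℂ^{k+1} → ℂ^{k+1} satisfies F(λz) = λ^d·F(z) for all λ ∈ ℂ and z ∈ ℂ^{k+1}; (ii) θ : ℂ^k → ℂ^{k+1} satisfies θ(x+γ) = e(x)^{−1}·θ(x) and θ(y+D̄γ) = E(y)^{−1}·θ(y) for all x, y ∈ ℂ^k; (iii) exp(π·H(τ, D̄γ))·e(x)^d = E(D̄x + τ) for all x ∈ ℂ^k; (iv) c : ℂ^k → ℂ satisfies c(x)·F(θ(x)) = exp(π·H(τ, D̄x))·θ(D̄x + τ) for all x ∈ ℂ^k. Then for every x ∈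 ℂ^k with F(θ(x+γ)) ≠ 0, one has c(x+γ) = c(x). -/
/-!
Evaluate (iv) at `x + γ` and transport both sides back to `x`. On the left, homogeneity of `F`
turns `θ (x + γ) = e(x)⁻¹ • θ x` into the factor `e(x)⁻ᵈ`; on the right, additivity of
`H τ` and the quasi-periodicity of `θ` along `D̄γ` produce the factor
`exp (π H(τ, D̄γ)) • E(D̄x + τ)⁻¹`, which equals `e(x)⁻ᵈ` by (iii). Hence `c (x + γ)` and `c x`
scale the same nonzero vector `F (θ (x + γ))` to the same result.
-/

open Complex

section QuasiPeriodic

variable {K A V G : Type*} [CommMonoid K] [AddCommGroup A] [MulAction K V]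
  [FunLike G A A] [AddHomClass G A A]

theorem factor_add_smul_eq_factor_smul {F : V → V} {d : ℕ}
    (hF : ∀ (t : K) z, F (t • z) = t ^ d • F z)
    {θ : A → V} {D : G} {τ γ : A} {u v ψ : A → K}
    (hψ : ∀ p q, ψ (p + q) = ψ p * ψ q)
    (hu : ∀ x, θ (x + γ) = u x • θ x) (hv : ∀ y, θ (y + D γ) = v y • θ y)
    (huv : ∀ x, ψ (D γ) * v (D x + τ) = u x ^ d)
    {c : A → K} (hc : ∀ x, c x • F (θ x) = ψ (D x) • θ (D x + τ)) (x : A) :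
    c (x + γ) • F (θ (x + γ)) = c x • F (θ (x + γ)) :=
  calc c (x + γ) • F (θ (x + γ))
      = ψ (D x + D γ) • θ ((D x + τ) + D γ) := by rw [hc, map_add, add_right_comm]
    _ = u x ^ d • (ψ (D x) • θ (D x + τ)) := by
        rw [hv, smul_smul, smul_smul, hψ, mul_assoc, huv, mul_comm]
    _ = c x • F (θ (x + γ)) := by rw [← hc, hu, hF, smul_comm]

end QuasiPeriodic

theorem periodicity_of_factor_general
    (k d : ℕ)
    (H : (Fin k → ℂ) → (Fin k → ℂ) → ℂ)
    -- `H` is a Hermitian form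
    (Hadd : ∀ w w₁ w₂, H w (w₁ + w₂) = H w w₁ + H w w₂)
    (D : (Fin k → ℂ) →ₗ[ℂ] (Fin k → ℂ))
    (τ γ : Fin k → ℂ)
    (a b : ℂ)
    (F : (Fin (k + 1) → ℂ) → (Fin (k + 1) → ℂ))
    -- (i) `F` is homogeneous of degree `d`
    (hF : ∀ (lam : ℂ) (z : Fin (k + 1) → ℂ), F (lam • z) = lam ^ d • F z)
    (θ : (Fin k → ℂ) → (Fin (k + 1) → ℂ))
    -- (ii) `θ(x+γ) = e(x)⁻¹·θ(x)` and `θ(y+D̄γ) = E(y)⁻¹·θ(y)`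
    (hθγ : ∀ x, θ (x + γ) =
      (a * Complex.exp ((Real.pi : ℂ) * (H γ x + H γ γ / 2)))⁻¹ • θ x)
    (hθDγ : ∀ y, θ (y + D γ) =
      (b * Complex.exp ((Real.pi : ℂ) * (H (D γ) y + H (D γ) (D γ) / 2)))⁻¹ • θ y)
    -- (iii) `exp(π·H(τ,D̄γ))·e(x)^d = E(D̄x + τ)`
    (hmultiplier : ∀ x, Complex.exp ((Real.pi : ℂ) * H τ (D γ)) *
        (a * Complex.exp ((Real.pi : ℂ) * (H γ x + H γ γ / 2))) ^ d =
      b * Complex.exp ((Real.pi : ℂ) * (H (D γ) (D x + τ) + H (D γ) (D γ) / 2)))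
    -- (iv) `c(x)·F(θ(x)) = exp(π·H(τ,D̄x))·θ(D̄x + τ)`
    (c : (Fin k → ℂ) → ℂ)
    (hc : ∀ x, c x • F (θ x) =
      Complex.exp ((Real.pi : ℂ) * H τ (D x)) • θ (D x + τ)) :
    ∀ x : Fin k → ℂ, F (θ (x + γ)) ≠ 0 → c (x + γ) = c x := by
  intro x hx
  have hψ : ∀ p q, exp (Real.pi * H τ (p + q)) = exp (Real.pi * H τ p) * exp (Real.pi * H τ q) :=
    fun p q => by rw [Hadd, mul_add, exp_add]
  have huv : ∀ x, exp (Real.pi * H τ (D γ)) *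
      (b * exp (Real.pi * (H (D γ) (D x + τ) + H (D γ) (D γ) / 2)))⁻¹ =
      (a * exp (Real.pi * (H γ x + H γ γ / 2)))⁻¹ ^ d := fun x => by
    rw [← hmultiplier, mul_inv, ← mul_assoc, mul_inv_cancel₀ (exp_ne_zero _), one_mul, inv_pow]
  exact smul_left_injective ℂ hx
    (factor_add_smul_eq_factor_smul hF (ψ := fun y => exp (Real.pi * H τ y)) hψ hθγ hθDγ huv hc x)

/-- periodicity of the proportionality factor `c` relating the
polynomial lift `F` of a Lattès map to the lifted dilation on `L(H,α)`.
Here `e(x) = a·exp(π(H(γ,x)+H(γ,γ)/2))` and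
`E(y) = b·exp(π(H(D̄γ,y)+H(D̄γ,D̄γ)/2))` are the multipliers at `γ` and `D̄γ`. -/
theorem periodicity_of_factor
    (k d : ℕ) (hk : 1 ≤ k) (hd : 1 ≤ d)
    (H : (Fin k → ℂ) → (Fin k → ℂ) → ℂ)
    -- `H` is a Hermitian form
    (Hadd : ∀ w w₁ w₂, H w (w₁ + w₂) = H w w₁ + H w w₂)
    (Hsmul : ∀ (c : ℂ) w w', H w (c • w') = c * H w w')
    (Hconj : ∀ w w', H w' w = starRingEnd ℂ (H w w'))
    (D : (Fin k → ℂ) →ₗ[ℂ] (Fin k → ℂ))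
    (τ γ : Fin k → ℂ)
    (a b : ℂ) (ha : a ≠ 0) (hb : b ≠ 0)
    (F : (Fin (k + 1) → ℂ) → (Fin (k + 1) → ℂ))
    -- (i) `F` is homogeneous of degree `d`
    (hF : ∀ (lam : ℂ) (z : Fin (k + 1) → ℂ), F (lam • z) = lam ^ d • F z)
    (θ : (Fin k → ℂ) → (Fin (k + 1) → ℂ))
    -- (ii) `θ(x+γ) = e(x)⁻¹·θ(x)` and `θ(y+D̄γ) = E(y)⁻¹·θ(y)`
    (hθγ : ∀ x, θ (x + γ) =
      (a * Complex.exp ((Real.pi : ℂ) * (H γ x + H γ γ / 2)))⁻¹ • θ x)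
    (hθDγ : ∀ y, θ (y + D γ) =
      (b * Complex.exp ((Real.pi : ℂ) * (H (D γ) y + H (D γ) (D γ) / 2)))⁻¹ • θ y)
    -- (iii) `exp(π·H(τ,D̄γ))·e(x)^d = E(D̄x + τ)`
    (hmultiplier : ∀ x, Complex.exp ((Real.pi : ℂ) * H τ (D γ)) *
        (a * Complex.exp ((Real.pi : ℂ) * (H γ x + H γ γ / 2))) ^ d =
      b * Complex.exp ((Real.pi : ℂ) * (H (D γ) (D x + τ) + H (D γ) (D γ) / 2)))
    -- (iv) `c(x)·F(θ(x)) = exp(π·H(τ,D̄x))·θ(D̄x + τ)`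
    (c : (Fin k → ℂ) → ℂ)
    (hc : ∀ x, c x • F (θ x) =
      Complex.exp ((Real.pi : ℂ) * H τ (D x)) • θ (D x + τ)) :
    ∀ x : Fin k → ℂ, F (θ (x + γ)) ≠ 0 → c (x + γ) = c x :=
  periodicity_of_factor_general k d H Hadd D τ γ a b F hF θ hθγ hθDγ hmultiplier c hc
end

section
/- Let α, a, b, a', b', c, d be complex numbers with a ≠ b, satisfying a'² = 4·a·(a² − α²), b'² = 4·b·(b² − α²), (a − b)²·c = (1/4)·(a' − b')² − (a + b)·(a − b)², and (a − b)²·d = (1/4)·(a' + b')² − (a + b)·(a − b)². Set σ₁ := (a·b + α²)², σ₂ := (a² − α²)·(b² − α²), σ₃ := (a·b − α²)². Then the following three identities hold: (a − b)⁴·(c·d + α²)² = (σ₁ − σ₂ + σ₃)², (a − b)⁴·(c² − α²)·(d² − α²) = (−σ₁ + σ₂ + σ₃)², and (a − b)⁴·(c·d − α²)² = (σ₁ + σ₂ − σ₃)². -/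
/-- the algebraic content of the semiconjugacy `σ ∘ D₂ = f₂ ∘ σ`
for the Lattès example `f₂[x:y:z] = [(x−y+z)² : (−x+y+z)² : (x+y−z)²]`, with
`σ = [σ₁ : σ₂ : σ₃]`, `σ₁ = (℘x·℘y + α²)²`, `σ₂ = (℘x² − α²)(℘y² − α²)`,
`σ₃ = (℘x·℘y − α²)²`. -/
theorem lattes_f2_semiconjugacy
    (α a b a' b' c d : ℂ) (hab : a ≠ b)
    (hdiffa : a' ^ 2 = 4 * a * (a ^ 2 - α ^ 2))
    (hdiffb : b' ^ 2 = 4 * b * (b ^ 2 - α ^ 2))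
    (haddc : (a - b) ^ 2 * c = (1 / 4) * (a' - b') ^ 2 - (a + b) * (a - b) ^ 2)
    (haddd : (a - b) ^ 2 * d = (1 / 4) * (a' + b') ^ 2 - (a + b) * (a - b) ^ 2)
    (σ₁ σ₂ σ₃ : ℂ)
    (hσ₁ : σ₁ = (a * b + α ^ 2) ^ 2)
    (hσ₂ : σ₂ = (a ^ 2 - α ^ 2) * (b ^ 2 - α ^ 2))
    (hσ₃ : σ₃ = (a * b - α ^ 2) ^ 2) :
    (a - b) ^ 4 * (c * d + α ^ 2) ^ 2 = (σ₁ - σ₂ + σ₃) ^ 2 ∧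
    (a - b) ^ 4 * (c ^ 2 - α ^ 2) * (d ^ 2 - α ^ 2) = (-σ₁ + σ₂ + σ₃) ^ 2 ∧
    (a - b) ^ 4 * (c * d - α ^ 2) ^ 2 = (σ₁ + σ₂ - σ₃) ^ 2 := by
  have hne : (a - b) ^ 4 ≠ 0 := pow_ne_zero 4 (sub_ne_zero.mpr hab)
  -- product formula for (a-b)⁴·c·d in terms of a'², b'²
  have h2 : (a - b) ^ 2 * c * ((a - b) ^ 2 * d) =
      (1 / 16) * (a' ^ 2 - b' ^ 2) ^ 2
        - (1 / 2) * (a + b) * (a' ^ 2 + b' ^ 2) * (a - b) ^ 2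
        + (a + b) ^ 2 * (a - b) ^ 4 := by
    rw [haddc, haddd]; ring
  -- product formula for ((a-b)⁴c²-α²(a-b)⁴)((a-b)⁴d²-α²(a-b)⁴) in terms of a'², b'²
  have h3 : (((a - b) ^ 2 * c) ^ 2 - α ^ 2 * (a - b) ^ 4) *
        (((a - b) ^ 2 * d) ^ 2 - α ^ 2 * (a - b) ^ 4) =
      ((a' ^ 2 - b' ^ 2) ^ 2) ^ 2 / 256
        - ((a + b) * (a - b) ^ 2 / 2) * ((a' ^ 2 - b' ^ 2) ^ 2) * (2 * (a' ^ 2 + b' ^ 2)) / 16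
        + ((a + b) ^ 2 * (a - b) ^ 4 - α ^ 2 * (a - b) ^ 4) *
            (4 * (a' ^ 2 + b' ^ 2) ^ 2 - 2 * (a' ^ 2 - b' ^ 2) ^ 2) / 16
        + ((a + b) ^ 2 * (a - b) ^ 4 / 4) * (a' ^ 2 - b' ^ 2) ^ 2
        - ((a + b) * (a - b) ^ 2 / 2) *
            ((a + b) ^ 2 * (a - b) ^ 4 - α ^ 2 * (a - b) ^ 4) * (2 * (a' ^ 2 + b' ^ 2))
        + ((a + b) ^ 2 * (a - b) ^ 4 - α ^ 2 * (a - b) ^ 4) ^ 2 := by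
    rw [haddc, haddd]; ring
  rw [hdiffa, hdiffb] at h2 h3
  refine ⟨?_, ?_, ?_⟩
  · refine mul_left_cancel₀ hne ?_
    rw [show (a - b) ^ 4 * ((a - b) ^ 4 * (c * d + α ^ 2) ^ 2) =
        ((a - b) ^ 2 * c * ((a - b) ^ 2 * d) + α ^ 2 * (a - b) ^ 4) ^ 2 from by ring,
      h2, hσ₁, hσ₂, hσ₃]
    ring
  · refine mul_left_cancel₀ hne ?_
    rw [show (a - b) ^ 4 * ((a - b) ^ 4 * (c ^ 2 - α ^ 2) * (d ^ 2 - α ^ 2)) =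
        (((a - b) ^ 2 * c) ^ 2 - α ^ 2 * (a - b) ^ 4) *
          (((a - b) ^ 2 * d) ^ 2 - α ^ 2 * (a - b) ^ 4) from by ring,
      h3, hσ₁, hσ₂, hσ₃]
    ring
  · refine mul_left_cancel₀ hne ?_
    rw [show (a - b) ^ 4 * ((a - b) ^ 4 * (c * d - α ^ 2) ^ 2) =
        ((a - b) ^ 2 * c * ((a - b) ^ 2 * d) - α ^ 2 * (a - b) ^ 4) ^ 2 from by ring,
      h2, hσ₁, hσ₂, hσ₃]
    ring
end

section
/- Define the ℂ-linear map M : ℂ² → ℂ² by M(u,v) = (−i·v, i·u). Then M ∘ M is the identity of ℂ², and for every x ∈ ℂ, setting x' := x + (1−i)/2, one has M(x, i·x + (1+i)/2) = (x', i·x' + (1+i)/2 − (1+i)); since (0, 1+i) belongs to the lattice (ℤ + iℤ)², the map M sends every point of the line L = {(x, i·x + (1+i)/2) : x ∈ ℂ} to a point of L translated by a vector of the lattice (ℤ + iℤ)². -/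
open Complex

/-- the order-two unitary map `M(u,v) = (−i·v, i·u)` satisfies
`M ∘ M = id`, sends `(x, ix + (1+i)/2)` to `(x', ix' + (1+i)/2 − (1+i))` with
`x' = x + (1−i)/2`, and — since `(0, 1+i)` lies in the Gaussian lattice — it
sends every point of the line `L = {(x, ix + (1+i)/2)}` to a point of `L`
translated by a vector of the lattice `(ℤ + iℤ)²`. -/
theorem stabilizer_of_line
    (M : (ℂ × ℂ) →ₗ[ℂ] (ℂ × ℂ))
    (hM : ∀ u v : ℂ, M (u, v) = (-Complex.I * v, Complex.I * u)) :
    (∀ p : ℂ × ℂ, M (M p) = p) ∧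
    (∀ x : ℂ,
      M (x, Complex.I * x + (1 + Complex.I) / 2) =
        (x + (1 - Complex.I) / 2,
          Complex.I * (x + (1 - Complex.I) / 2) + (1 + Complex.I) / 2 -
            (1 + Complex.I))) ∧
    ((∃ m n : ℤ, (0 : ℂ) = (m : ℂ) + (n : ℂ) * Complex.I) ∧
      (∃ m n : ℤ, (1 + Complex.I : ℂ) = (m : ℂ) + (n : ℂ) * Complex.I)) ∧
    (∀ p : ℂ × ℂ, p ∈ {p : ℂ × ℂ | ∃ x : ℂ, p = (x, Complex.I * x + (1 + Complex.I) / 2)} →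
      ∃ q γ : ℂ × ℂ,
        q ∈ {p : ℂ × ℂ | ∃ x : ℂ, p = (x, Complex.I * x + (1 + Complex.I) / 2)} ∧
        (∃ m n : ℤ, γ.1 = (m : ℂ) + (n : ℂ) * Complex.I) ∧
        (∃ m n : ℤ, γ.2 = (m : ℂ) + (n : ℂ) * Complex.I) ∧
        M p = q + γ) := by
  have key : ∀ x : ℂ,
      M (x, Complex.I * x + (1 + Complex.I) / 2) =
        (x + (1 - Complex.I) / 2,
          Complex.I * (x + (1 - Complex.I) / 2) + (1 + Complex.I) / 2 -
            (1 + Complex.I)) := by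
    intro x
    rw [hM]
    refine Prod.ext ?_ ?_ <;> simp <;> ring_nf <;>
      simp [Complex.I_sq] <;> ring
  refine ⟨?_, key, ⟨⟨0, 0, by simp⟩, ⟨1, 1, by simp⟩⟩, ?_⟩
  · intro p
    rcases p with ⟨u, v⟩
    rw [hM, hM]
    refine Prod.ext ?_ ?_ <;> simp <;> ring_nf <;> simp [Complex.I_sq]
  · rintro p ⟨x, rfl⟩
    refine ⟨(x + (1 - Complex.I) / 2,
        Complex.I * (x + (1 - Complex.I) / 2) + (1 + Complex.I) / 2),
      (0, -(1 + Complex.I)), ⟨_, rfl⟩, ⟨0, 0, by simp⟩, ⟨-1, -1, by push_cast; ring⟩, ?_⟩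
    rw [key]
    refine Prod.ext ?_ ?_ <;> simp <;> ring
end
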